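/- For every nonnegative integer n, the first-order differential operator X_0 = Σ_{i=1}^N (z_i − z_{i+1})^{-1} (∂_i − ∂_{i+1}) leaves invariant the space 𝒳_0^n = ℂ[σ_1, σ_2, σ_3] ∩ P^n; that is, if f is a complex polynomial in z_1,…,z_N of total degree at most n that can be written as a polynomial in the power sums σ_1, σ_2, σ_3, then X_0 f (computed in the field of rational functions ℂ(z_1,…,z_N)) is again a polynomial in σ_1, σ_2, σ_3 of total degree at most n. -/

import Mathlib

noncomputable section

open MvPolynomial

/-- Polynomials in `N` variables over `ℂ`. -/
abbrev MvP (N : ℕ) : Type := MvPolynomial (Fin N) ℂ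

/-- The canonical embedding of polynomials into the field of rational functions. -/
noncomputable def phi (N : ℕ) : MvP N →+* FractionRing (MvP N) :=
  algebraMap (MvP N) (FractionRing (MvP N))

/-- The power sum `σ_k = ∑ i, z_i ^ k`. -/
def sig (N k : ℕ) : MvP N := ∑ i : Fin N, X i ^ k

/-- The operator `X_0 = ∑ i (z_i - z_{i+1})⁻¹ (∂_i - ∂_{i+1})` (indices cyclic),
computed in the field of rational functions. -/
noncomputable def X0op (N : ℕ) [NeZero N] (f : MvP N) : FractionRing (MvP N) :=
  ∑ i : Fin N, (phi N (X i - X (i + 1)))⁻¹ * phi N (pderiv i f - pderiv (i + 1) f)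

/-!
`X0` is a derivation `ℂ[z] → ℂ(z)`, and since `(z_i ^ k - z_{i+1} ^ k) / (z_i - z_{i+1})` is a
polynomial it sends the generators to polynomials: `X0 σ₁ = 0`, `X0 σ₂ = 2N`, `X0 σ₃ = 6σ₁`.
Giving `σ_k` the weight `k`, the Leibniz rule then shows that `X0` maps the span of the
`σ`-monomials of weight `≤ n` into (the image of) itself. An element of `ℂ[σ₁, σ₂, σ₃]` of degree
`≤ n` lies in that span: each `σ_k` is homogeneous of degree `k`, so the homogeneous component of
degree `d` of a combination of `σ`-monomials keeps exactly the monomials of weight `d`.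
-/

variable {N : ℕ}

def sigSpan (N n : ℕ) : Submodule ℂ (MvP N) :=
  Submodule.span ℂ
    {p | ∃ a b c : ℕ, a + 2 * b + 3 * c ≤ n ∧ p = sig N 1 ^ a * sig N 2 ^ b * sig N 3 ^ c}

theorem sig_monomial_mem_sigSpan (a b c : ℕ) :
    sig N 1 ^ a * sig N 2 ^ b * sig N 3 ^ c ∈ sigSpan N (a + 2 * b + 3 * c) :=
  Submodule.subset_span ⟨a, b, c, le_rfl, rfl⟩

theorem sigSpan_mono : Monotone (sigSpan N) := fun _ _ hmn ↦
  Submodule.span_mono fun _ ⟨a, b, c, hw, hp⟩ ↦ ⟨a, b, c, hw.trans hmn, hp⟩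

theorem C_mem_sigSpan (c : ℂ) (n : ℕ) : C c ∈ sigSpan N n := by
  rw [C_eq_smul_one]
  refine Submodule.smul_mem _ c (sigSpan_mono (Nat.zero_le n) ?_)
  simpa using sig_monomial_mem_sigSpan (N := N) 0 0 0

theorem sig_mem_sigSpan {k : ℕ} (hk : k ∈ ({1, 2, 3} : Set ℕ)) : sig N k ∈ sigSpan N k := by
  rcases hk with rfl | rfl | rfl
  exacts [by simpa using sig_monomial_mem_sigSpan (N := N) 1 0 0,
    by simpa using sig_monomial_mem_sigSpan (N := N) 0 1 0,
    by simpa using sig_monomial_mem_sigSpan (N := N) 0 0 1]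

theorem mul_mem_sigSpan {m k : ℕ} {p q : MvP N} (hp : p ∈ sigSpan N m) (hq : q ∈ sigSpan N k) :
    p * q ∈ sigSpan N (m + k) := by
  have hpq := Submodule.mul_mem_mul hp hq
  rw [sigSpan, sigSpan, Submodule.span_mul_span] at hpq
  refine Submodule.span_mono ?_ hpq
  rintro _ ⟨_, ⟨a, b, c, hw, rfl⟩, _, ⟨a', b', c', hw', rfl⟩, rfl⟩
  exact ⟨a + a', b + b', c + c', by omega, by ring⟩

theorem isHomogeneous_sig (k : ℕ) : (sig N k).IsHomogeneous k :=
  IsHomogeneous.sum _ _ _ fun i _ ↦ isHomogeneous_X_pow i k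

theorem isHomogeneous_sig_monomial (a b c : ℕ) :
    (sig N 1 ^ a * sig N 2 ^ b * sig N 3 ^ c).IsHomogeneous (a + 2 * b + 3 * c) := by
  simpa [mul_comm] using
    (((isHomogeneous_sig (N := N) 1).pow a).mul ((isHomogeneous_sig 2).pow b)).mul
      ((isHomogeneous_sig 3).pow c)

theorem totalDegree_le_of_mem_sigSpan {n : ℕ} {p : MvP N} (hp : p ∈ sigSpan N n) :
    p.totalDegree ≤ n := by
  suffices sigSpan N n ≤ restrictTotalDegree (Fin N) ℂ n from
    (mem_restrictTotalDegree _ _ _).1 (this hp)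
  refine Submodule.span_le.2 ?_
  rintro _ ⟨a, b, c, hw, rfl⟩
  exact (mem_restrictTotalDegree _ _ _).2
    ((isHomogeneous_sig_monomial a b c).totalDegree_le.trans hw)

theorem homogeneousComponent_mem_sigSpan {m : ℕ} {p : MvP N} (hp : p ∈ sigSpan N m) (d : ℕ) :
    homogeneousComponent d p ∈ sigSpan N d := by
  induction hp using Submodule.span_induction with
  | mem _ hx =>
    obtain ⟨a, b, c, -, rfl⟩ := hx
    rw [homogeneousComponent_of_mem (isHomogeneous_sig_monomial a b c)]
    split_ifs with hd
    · exact hd ▸ sig_monomial_mem_sigSpan a b c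
    · exact zero_mem _
  | zero => simp
  | add _ _ _ _ hx hy => simpa using add_mem hx hy
  | smul r _ _ hx => simpa using Submodule.smul_mem _ r hx

theorem exists_mem_sigSpan_of_mem_adjoin {p : MvP N}
    (hp : p ∈ Algebra.adjoin ℂ ({sig N 1, sig N 2, sig N 3} : Set (MvP N))) :
    ∃ m, p ∈ sigSpan N m := by
  induction hp using Algebra.adjoin_induction with
  | mem _ hx =>
    rcases hx with rfl | rfl | rfl
    exacts [⟨1, sig_mem_sigSpan (by simp)⟩, ⟨2, sig_mem_sigSpan (by simp)⟩,
      ⟨3, sig_mem_sigSpan (by simp)⟩]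
  | algebraMap c => exact ⟨0, C_mem_sigSpan c 0⟩
  | add _ _ _ _ hx hy =>
    obtain ⟨⟨m, hx⟩, ⟨k, hy⟩⟩ := And.intro hx hy
    exact ⟨max m k, add_mem (sigSpan_mono (le_max_left m k) hx)
      (sigSpan_mono (le_max_right m k) hy)⟩
  | mul _ _ _ _ hx hy =>
    obtain ⟨⟨m, hx⟩, ⟨k, hy⟩⟩ := And.intro hx hy
    exact ⟨m + k, mul_mem_sigSpan hx hy⟩

theorem mem_sigSpan_of_mem_adjoin {n : ℕ} {p : MvP N}
    (hp : p ∈ Algebra.adjoin ℂ ({sig N 1, sig N 2, sig N 3} : Set (MvP N)))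
    (hdeg : p.totalDegree ≤ n) : p ∈ sigSpan N n := by
  obtain ⟨m, hm⟩ := exists_mem_sigSpan_of_mem_adjoin hp
  rw [← sum_homogeneousComponent p]
  refine sum_mem fun d hd ↦ sigSpan_mono ?_ (homogeneousComponent_mem_sigSpan hm d)
  have := Finset.mem_range.1 hd
  omega

theorem mem_adjoin_of_mem_sigSpan {n : ℕ} {p : MvP N} (hp : p ∈ sigSpan N n) :
    p ∈ Algebra.adjoin ℂ ({sig N 1, sig N 2, sig N 3} : Set (MvP N)) := by
  set A := Algebra.adjoin ℂ ({sig N 1, sig N 2, sig N 3} : Set (MvP N))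
  suffices sigSpan N n ≤ Subalgebra.toSubmodule A from this hp
  refine Submodule.span_le.2 ?_
  rintro _ ⟨a, b, c, -, rfl⟩
  exact A.mul_mem (A.mul_mem (A.pow_mem (Algebra.subset_adjoin (by simp)) a)
    (A.pow_mem (Algebra.subset_adjoin (by simp)) b)) (A.pow_mem (Algebra.subset_adjoin (by simp)) c)

theorem pderiv_sig (i : Fin N) (k : ℕ) : pderiv i (sig N k) = (k : MvP N) * X i ^ (k - 1) := by
  classical
  simp [sig, pderiv_X, Pi.single_apply]

section X0

variable [NeZero N]

def X0der (N : ℕ) [NeZero N] : Derivation ℂ (MvP N) (FractionRing (MvP N)) :=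
  ∑ i : Fin N, (phi N (X i - X (i + 1)))⁻¹ •
    (Algebra.linearMap (MvP N) (FractionRing (MvP N))).compDer (pderiv i - pderiv (i + 1))

theorem X0der_apply (f : MvP N) : X0der N f = X0op N f := by
  rw [X0der, ← Derivation.coeFnAddMonoidHom_apply, map_sum]
  simp [X0op, phi, Derivation.coeFnAddMonoidHom_apply]

theorem phi_X_sub_X_add_one_ne_zero (hN : 2 ≤ N) (i : Fin N) : phi N (X i - X (i + 1)) ≠ 0 := by
  have hi : i ≠ i + 1 := by
    intro h
    have := congrArg Fin.val (left_eq_add.1 h)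
    rw [Fin.val_one', Fin.val_zero, Nat.mod_eq_of_lt (by omega)] at this
    exact one_ne_zero this
  exact (map_ne_zero_iff (phi N) (IsFractionRing.injective _ _)).2
    (sub_ne_zero.2 fun h ↦ hi (X_injective h))

theorem X0der_eq_of_pderiv_sub_eq (hN : 2 ≤ N) (f : MvP N) (q : Fin N → MvP N)
    (hq : ∀ i, pderiv i f - pderiv (i + 1) f = (X i - X (i + 1)) * q i) :
    X0der N f = phi N (∑ i, q i) := by
  rw [X0der_apply, X0op, map_sum]
  refine Finset.sum_congr rfl fun i _ ↦ ?_
  rw [hq, map_mul, inv_mul_cancel_left₀ (phi_X_sub_X_add_one_ne_zero hN i)]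

theorem X0der_sig_one : X0der N (sig N 1) = 0 := by
  simp [X0der_apply, X0op, pderiv_sig]

theorem X0der_sig_two (hN : 2 ≤ N) : X0der N (sig N 2) = phi N (C (2 * N)) := by
  rw [X0der_eq_of_pderiv_sub_eq hN _ (fun _ ↦ C 2)
    fun i ↦ by simp [pderiv_sig, map_ofNat C 2]; ring]
  simp [mul_comm]

theorem X0der_sig_three (hN : 2 ≤ N) : X0der N (sig N 3) = phi N (C 6 * sig N 1) := by
  rw [X0der_eq_of_pderiv_sub_eq hN _ (fun i ↦ C 3 * (X i + X (i + 1)))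
    fun i ↦ by simp [pderiv_sig, map_ofNat C 3]; ring]
  have hsum : ∑ i : Fin N, X i = sig N 1 := by simp [sig]
  have hshift : ∑ i : Fin N, X (i + 1) = sig N 1 :=
    (Fintype.sum_equiv (Equiv.addRight 1) _ _ fun _ ↦ rfl).trans hsum
  rw [← Finset.mul_sum, Finset.sum_add_distrib, hsum, hshift, map_ofNat C 3, map_ofNat C 6]
  congr 1
  ring

def x0Preimage (N n : ℕ) [NeZero N] : Submodule ℂ (MvP N) :=
  ((sigSpan N n).map (IsScalarTower.toAlgHom ℂ (MvP N) (FractionRing (MvP N))).toLinearMap).comap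
    (X0der N : MvP N →ₗ[ℂ] FractionRing (MvP N))

theorem mem_x0Preimage {n : ℕ} {f : MvP N} :
    f ∈ x0Preimage N n ↔ ∃ g ∈ sigSpan N n, phi N g = X0der N f :=
  Iff.rfl

theorem x0Preimage_mono {m n : ℕ} (hmn : m ≤ n) : x0Preimage N m ≤ x0Preimage N n :=
  Submodule.comap_mono (Submodule.map_mono (sigSpan_mono hmn))

theorem mul_mem_sigSpan_inf_x0Preimage {m k : ℕ} {f h : MvP N}
    (hf : f ∈ sigSpan N m ⊓ x0Preimage N m) (hh : h ∈ sigSpan N k ⊓ x0Preimage N k) :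
    f * h ∈ sigSpan N (m + k) ⊓ x0Preimage N (m + k) := by
  obtain ⟨hf, hfl⟩ := Submodule.mem_inf.1 hf
  obtain ⟨hh, hhl⟩ := Submodule.mem_inf.1 hh
  obtain ⟨gf, hgf, hDf⟩ := mem_x0Preimage.1 hfl
  obtain ⟨gh, hgh, hDh⟩ := mem_x0Preimage.1 hhl
  refine ⟨mul_mem_sigSpan hf hh, mem_x0Preimage.2 ⟨f * gh + h * gf, ?_, ?_⟩⟩
  · exact add_mem (mul_mem_sigSpan hf hgh) (add_comm k m ▸ mul_mem_sigSpan hh hgf)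
  · rw [Derivation.leibniz, ← hDf, ← hDh]
    simp [phi, Algebra.smul_def]

theorem pow_mem_sigSpan_inf_x0Preimage {m : ℕ} {f : MvP N} (hf : f ∈ sigSpan N m ⊓ x0Preimage N m)
    (j : ℕ) : f ^ j ∈ sigSpan N (m * j) ⊓ x0Preimage N (m * j) := by
  induction j with
  | zero =>
    refine ⟨by simpa using C_mem_sigSpan (N := N) 1 0, mem_x0Preimage.2 ⟨0, zero_mem _, ?_⟩⟩
    simp
  | succ j ih => simpa [pow_succ, mul_add] using mul_mem_sigSpan_inf_x0Preimage ih hf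

theorem sigSpan_le_x0Preimage (hN : 2 ≤ N) (n : ℕ) : sigSpan N n ≤ x0Preimage N n := by
  have h1 : sig N 1 ∈ sigSpan N 1 ⊓ x0Preimage N 1 :=
    Submodule.mem_inf.2 ⟨sig_mem_sigSpan (by simp),
      mem_x0Preimage.2 ⟨0, zero_mem _, by simp [X0der_sig_one]⟩⟩
  have h2 : sig N 2 ∈ sigSpan N 2 ⊓ x0Preimage N 2 :=
    Submodule.mem_inf.2 ⟨sig_mem_sigSpan (by simp),
      mem_x0Preimage.2 ⟨_, C_mem_sigSpan _ 2, (X0der_sig_two hN).symm⟩⟩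
  have h3 : sig N 3 ∈ sigSpan N 3 ⊓ x0Preimage N 3 :=
    Submodule.mem_inf.2 ⟨sig_mem_sigSpan (by simp), mem_x0Preimage.2 ⟨_,
      sigSpan_mono (by norm_num : 0 + 1 ≤ 3)
        (mul_mem_sigSpan (C_mem_sigSpan 6 0) (sig_mem_sigSpan (by simp))),
      (X0der_sig_three hN).symm⟩⟩
  refine Submodule.span_le.2 ?_
  rintro _ ⟨a, b, c, hw, rfl⟩
  have hmono := mul_mem_sigSpan_inf_x0Preimage (mul_mem_sigSpan_inf_x0Preimage
    (pow_mem_sigSpan_inf_x0Preimage h1 a) (pow_mem_sigSpan_inf_x0Preimage h2 b))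
    (pow_mem_sigSpan_inf_x0Preimage h3 c)
  exact x0Preimage_mono (by omega) (Submodule.mem_inf.1 hmono).2

end X0

theorem stmt_0 (N : ℕ) [NeZero N] (hN : 3 ≤ N) (n : ℕ) (f : MvP N)
    (hmem : f ∈ Algebra.adjoin ℂ ({sig N 1, sig N 2, sig N 3} : Set (MvP N)))
    (hdeg : f.totalDegree ≤ n) :
    ∃ g : MvP N,
      g ∈ Algebra.adjoin ℂ ({sig N 1, sig N 2, sig N 3} : Set (MvP N)) ∧
      g.totalDegree ≤ n ∧ phi N g = X0op N f := by
  obtain ⟨g, hg, hgf⟩ :=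
    sigSpan_le_x0Preimage (by omega) n (mem_sigSpan_of_mem_adjoin hmem hdeg)
  exact ⟨g, mem_adjoin_of_mem_sigSpan hg, totalDegree_le_of_mem_sigSpan hg,
    hgf.trans (X0der_apply f)⟩
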